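/- arXiv:1902.00277 — 2 statements merged into one kernel-verified Lean document; each statement's English description precedes it below -/
import Mathlib

section
/- Let β(ε) = 2ν + 2ν_tur [ε:ε]^{1/2} with ν, ν_tur > 0 on 3×3 symmetric real matrices. Then the map ε ↦ β(ε)ε is strongly monotone: for all symmetric matrices ε₁, ε₂, [β(ε₁)ε₁ − β(ε₂)ε₂ : ε₁ − ε₂] ≥ 2ν [ε₁ − ε₂ : ε₁ − ε₂]. -/
/-! The stress splits as `2ν ε + 2ν_tur ‖ε‖ ε`. The linear part contributes exactly
`2ν ‖ε₁ - ε₂‖²`, and the map `x ↦ ‖x‖ x` is monotone in any real inner product space: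
by Cauchy–Schwarz, `⟪‖x‖ x - ‖y‖ y, x - y⟫ ≥ (‖x‖ + ‖y‖)(‖x‖ - ‖y‖)² ≥ 0`. -/

open RealInnerProductSpace

section

variable {E : Type*} [NormedAddCommGroup E] [InnerProductSpace ℝ E]

theorem real_inner_self_rpow_half (x : E) : ⟪x, x⟫ ^ ((1 : ℝ) / 2) = ‖x‖ := by
  rw [← Real.sqrt_eq_rpow, ← norm_eq_sqrt_real_inner]

theorem real_inner_norm_smul_sub_norm_smul_nonneg (x y : E) :
    0 ≤ ⟪‖x‖ • x - ‖y‖ • y, x - y⟫ := by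
  have hcs : ⟪x, y⟫ ≤ ‖x‖ * ‖y‖ := real_inner_le_norm x y
  have hexpand : ⟪‖x‖ • x - ‖y‖ • y, x - y⟫
      = ‖x‖ ^ 3 + ‖y‖ ^ 3 - (‖x‖ + ‖y‖) * ⟪x, y⟫ := by
    simp only [inner_sub_left, inner_sub_right, real_inner_smul_left,
      real_inner_self_eq_norm_sq, real_inner_comm x y]
    ring
  calc (0 : ℝ) ≤ (‖x‖ + ‖y‖) * (‖x‖ - ‖y‖) ^ 2 := by positivity
    _ = ‖x‖ ^ 3 + ‖y‖ ^ 3 - (‖x‖ + ‖y‖) * (‖x‖ * ‖y‖) := by ring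
    _ ≤ ⟪‖x‖ • x - ‖y‖ • y, x - y⟫ := by
      rw [hexpand]; gcongr

theorem real_inner_add_norm_smul_sub_ge (a : ℝ) {b : ℝ} (hb : 0 ≤ b) (x y : E) :
    a * ⟪x - y, x - y⟫ ≤ ⟪(a + b * ‖x‖) • x - (a + b * ‖y‖) • y, x - y⟫ := by
  have hsplit : (a + b * ‖x‖) • x - (a + b * ‖y‖) • y
      = a • (x - y) + b • (‖x‖ • x - ‖y‖ • y) := by
    simp only [add_smul, mul_smul, smul_sub]; abel
  rw [hsplit, inner_add_left, real_inner_smul_left, real_inner_smul_left]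
  exact le_add_of_nonneg_right (mul_nonneg hb (real_inner_norm_smul_sub_norm_smul_nonneg x y))

end

theorem smagorinsky_strong_monotone_general (ν νtur : ℝ) (hνtur : 0 < νtur)
    (ε₁ ε₂ : EuclideanSpace ℝ (Fin 3 × Fin 3)) :
    (inner ℝ ((2 * ν + 2 * νtur * (inner ℝ ε₁ ε₁ : ℝ) ^ ((1:ℝ)/2)) • ε₁
          - (2 * ν + 2 * νtur * (inner ℝ ε₂ ε₂ : ℝ) ^ ((1:ℝ)/2)) • ε₂) (ε₁ - ε₂) : ℝ)
      ≥ 2 * ν * (inner ℝ (ε₁ - ε₂) (ε₁ - ε₂) : ℝ) := by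
  rw [real_inner_self_rpow_half, real_inner_self_rpow_half]
  exact real_inner_add_norm_smul_sub_ge (2 * ν) (by positivity) ε₁ ε₂

/-- Strong monotonicity of the Smagorinsky stress `ε ↦ β(ε)ε`,
`β(ε) = 2ν + 2ν_tur [ε:ε]^{1/2}`, on (3×3)-matrices identified with
`EuclideanSpace ℝ (Fin 3 × Fin 3)` (Frobenius inner product). -/
theorem smagorinsky_strong_monotone (ν νtur : ℝ) (hν : 0 < ν) (hνtur : 0 < νtur)
    (ε₁ ε₂ : EuclideanSpace ℝ (Fin 3 × Fin 3))
    (hsym₁ : ∀ i j : Fin 3, ε₁ (i, j) = ε₁ (j, i))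
    (hsym₂ : ∀ i j : Fin 3, ε₂ (i, j) = ε₂ (j, i)) :
    (inner ℝ ((2 * ν + 2 * νtur * (inner ℝ ε₁ ε₁ : ℝ) ^ ((1:ℝ)/2)) • ε₁
          - (2 * ν + 2 * νtur * (inner ℝ ε₂ ε₂ : ℝ) ^ ((1:ℝ)/2)) • ε₂) (ε₁ - ε₂) : ℝ)
      ≥ 2 * ν * (inner ℝ (ε₁ - ε₂) (ε₁ - ε₂) : ℝ) :=
  smagorinsky_strong_monotone_general ν νtur hνtur ε₁ ε₂
end

section
/- The function D(ε) = ν [ε:ε] + (2/3) ν_tur [ε:ε]^{3/2}, defined on the vector space of 3×3 symmetric real matrices with ν, ν_tur ≥ 0, is convex. -/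
/-! Since `[ε:ε]^{3/2} = ‖ε‖³`, the potential is `ν ‖ε‖² + (2/3) ν_tur ‖ε‖³`, a nonnegative
combination of powers of the norm, which is convex and nonnegative. -/

lemma convex_setOf_symmetric (ι : Type*) :
    Convex ℝ {ε : EuclideanSpace ℝ (ι × ι) | ∀ i j, ε (i, j) = ε (j, i)} := by
  intro x hx y hy a b _ _ _ i j
  simp only [PiLp.add_apply, PiLp.smul_apply, hx i j, hy i j]

lemma real_inner_self_rpow_three_halves {E : Type*} [NormedAddCommGroup E]
    [InnerProductSpace ℝ E] (x : E) : inner ℝ x x ^ ((3 : ℝ) / 2) = ‖x‖ ^ 3 := by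
  rw [real_inner_self_eq_norm_sq, ← Real.rpow_natCast, ← Real.rpow_mul (norm_nonneg x)]
  norm_num

/-- Convexity of the Smagorinsky potential `D(ε) = ν [ε:ε] + (2/3) ν_tur [ε:ε]^{3/2}`
on the subspace of symmetric (3×3)-matrices, identified with
`EuclideanSpace ℝ (Fin 3 × Fin 3)` (Frobenius inner product). -/
theorem smagorinskyD_convex (ν νtur : ℝ) (hν : 0 ≤ ν) (hνtur : 0 ≤ νtur) :
    ConvexOn ℝ {ε : EuclideanSpace ℝ (Fin 3 × Fin 3) | ∀ i j : Fin 3, ε (i, j) = ε (j, i)}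
      (fun ε => ν * (inner ℝ ε ε : ℝ) + 2/3 * νtur * (inner ℝ ε ε : ℝ) ^ ((3:ℝ)/2)) := by
  have hnorm_pow (n : ℕ) := (convexOn_norm (convex_setOf_symmetric (Fin 3))).pow
    (fun x _ => norm_nonneg x) n
  have hcoeff : 0 ≤ 2 / 3 * νtur := by positivity
  refine (((hnorm_pow 2).smul hν).add ((hnorm_pow 3).smul hcoeff)).congr fun ε _ => ?_
  simp only [Pi.add_apply, Pi.pow_apply, smul_eq_mul]
  rw [real_inner_self_rpow_three_halves, real_inner_self_eq_norm_sq]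
end
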